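/- arXiv:2303.08037 — 2 statements merged into one kernel-verified Lean document; each statement's English description precedes it below -/
import Mathlib

section
/- For the eigenvalue combination λ₁ = 1 + 9iω, λ₂ = 1 + 19iω, λ₃ = λ₄ = iω with ω ≠ 0 real, the cubic λ₁ z³ − λ₂ z² + 5λ₃ z + λ₄ = 0 has at least one root z with |z| ≠ 1; hence the fourth-order Adams–Moulton scheme does not conserve kinetic energy under a constant magnetic field. -/
open Complex Polynomial

/-!
The roots of a split polynomial multiply to `± coeff 0 / leadingCoeff`, so if they all lay on the
unit circle the constant and leading coefficients would have equal norms. For the Adams–Moulton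
cubic these are `‖iω‖ = |ω|` and `‖1 + 9iω‖ = √(1 + 81ω²)`, which never agree.
-/

theorem Polynomial.exists_mem_roots_norm_ne_one {K : Type*} [NormedField K] [IsAlgClosed K]
    {p : K[X]} (h : ‖p.coeff 0‖ ≠ ‖p.leadingCoeff‖) : ∃ z ∈ p.roots, ‖z‖ ≠ 1 := by
  by_contra! hroots
  have hprod : ‖p.roots.prod‖ = 1 := by
    rw [← normHom_apply, map_multiset_prod]
    exact Multiset.prod_eq_one fun x hx => by
      obtain ⟨z, hz, rfl⟩ := Multiset.mem_map.mp hx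
      exact hroots z hz
  apply h
  rw [(IsAlgClosed.splits p).coeff_zero_eq_leadingCoeff_mul_prod_roots]
  simp [hprod]

theorem adams_moulton_root_off_unit_circle_general (ω : ℝ) :
    ∃ z : ℂ, (1 + 9 * I * ω) * z ^ 3 - (1 + 19 * I * ω) * z ^ 2
        + 5 * (I * ω) * z + I * ω = 0 ∧ ‖z‖ ≠ 1 := by
  set P : Cubic ℂ := ⟨1 + 9 * I * ω, -(1 + 19 * I * ω), 5 * (I * ω), I * ω⟩
  have ha : P.a ≠ 0 := fun h => by simpa [P] using congrArg re h
  have hnorm : ‖P.d‖ < ‖P.a‖ := by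
    rw [← sq_lt_sq₀ (norm_nonneg _) (norm_nonneg _), Complex.sq_norm, Complex.sq_norm]
    simp only [P, normSq_apply, mul_re, mul_im, add_re, add_im, I_re, I_im, ofReal_re,
      ofReal_im, one_re, one_im, re_ofNat, im_ofNat]
    nlinarith [sq_nonneg ω]
  obtain ⟨z, hz, hz1⟩ := P.toPoly.exists_mem_roots_norm_ne_one <| by
    rw [Cubic.coeff_eq_d, Cubic.leadingCoeff_of_a_ne_zero ha]
    exact hnorm.ne
  refine ⟨z, ?_, hz1⟩
  have hroot := (mem_roots'.mp hz).2
  simp only [P, Cubic.toPoly, IsRoot.def, eval_add, eval_mul, eval_C, eval_pow, eval_X] at hroot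
  linear_combination hroot

/-- For `λ₁ = 1 + 9iω`, `λ₂ = 1 + 19iω`, `λ₃ = λ₄ = iω` with real `ω ≠ 0`,
the cubic `λ₁ z³ - λ₂ z² + 5 λ₃ z + λ₄ = 0` has at least one root of modulus
different from `1`; hence the fourth-order Adams–Moulton scheme does not
conserve kinetic energy under a constant magnetic field. -/
theorem adams_moulton_root_off_unit_circle (ω : ℝ) (hω : ω ≠ 0) :
    ∃ z : ℂ, (1 + 9 * I * ω) * z ^ 3 - (1 + 19 * I * ω) * z ^ 2
        + 5 * (I * ω) * z + I * ω = 0 ∧ ‖z‖ ≠ 1 :=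
  adams_moulton_root_off_unit_circle_general ω
end

section
/- Let J be the rotation generator J = [[0,1,0],[−1,0,0],[0,0,0]] and ω ≠ 0 real. The linear three-step recurrence (I + 9ωJ̃)u^{n+1} = (I − 19ωJ̃)u^n − 5ωJ̃ u^{n−1} + ωJ̃ u^{n−2} (with J̃ = −J, matching the Adams–Moulton 4 update under B = ẑ) admits a solution sequence with ‖u^n‖ strictly increasing; equivalently, its companion matrix has spectral radius > 1 for some ω > 0. -/
/-!
Since `‖p w‖ = ‖a‖ ∏ ‖w - zᵢ‖` for a split polynomial with leading coefficient `a` and roots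
`zᵢ`, a point `w` at which `‖p w‖ < ‖a‖ ε ^ deg p` lies within `ε` of some root. For the
characteristic cubic with `ω ≥ 3` this happens at `w = -7/4` with `ε = 3/4`, so some root `z`
has `‖z‖ > 1`, and `n ↦ z ^ n` is a solution of the recurrence with strictly growing modulus.
-/

open Complex Polynomial NNReal

theorem Polynomial.Splits.exists_mem_roots_nnnorm_sub_lt {K : Type*} [NormedField K]
    {p : K[X]} (hp : p.Splits) {w : K} {ε : ℝ≥0}
    (h : ‖p.eval w‖₊ < ‖p.leadingCoeff‖₊ * ε ^ p.natDegree) :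
    ∃ z ∈ p.roots, ‖w - z‖₊ < ε := by
  by_contra! hfar
  refine h.not_ge ?_
  have hprod : ε ^ p.natDegree ≤ (p.roots.map fun z => ‖w - z‖₊).prod := by
    rw [hp.natDegree_eq_card_roots, ← Multiset.card_map (fun z => ‖w - z‖₊)]
    exact Multiset.pow_card_le_prod fun _ hx => by
      obtain ⟨z, hz, rfl⟩ := Multiset.mem_map.mp hx
      exact hfar z hz
  calc ‖p.leadingCoeff‖₊ * ε ^ p.natDegree
      ≤ ‖p.leadingCoeff‖₊ * (p.roots.map fun z => ‖w - z‖₊).prod := by gcongr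
    _ = ‖p.eval w‖₊ := by
      rw [hp.eval_eq_prod_roots, nnnorm_mul, ← nnnormHom_apply (p.roots.map _).prod,
        map_multiset_prod, Multiset.map_map]
      rfl

noncomputable def adamsMoultonCharCubic (ω : ℝ) : Cubic ℂ :=
  ⟨1 + 9 * I * ω, -(1 - 19 * I * ω), 5 * (I * ω), -(I * ω)⟩

lemma adamsMoultonCharCubic_a_ne_zero (ω : ℝ) : (adamsMoultonCharCubic ω).a ≠ 0 := by
  intro h
  simpa [adamsMoultonCharCubic] using congrArg re h

lemma adamsMoultonCharCubic_mem_roots_iff (ω : ℝ) (z : ℂ) :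
    z ∈ (adamsMoultonCharCubic ω).roots ↔ (1 + 9 * I * ω) * z ^ 3 - (1 - 19 * I * ω) * z ^ 2
      + 5 * (I * ω) * z - I * ω = 0 := by
  rw [Cubic.mem_roots_iff (Cubic.ne_zero_of_a_ne_zero (adamsMoultonCharCubic_a_ne_zero ω))]
  simp only [adamsMoultonCharCubic, neg_mul, ← sub_eq_add_neg]

lemma adamsMoultonCharCubic_eval_neg_seven_fourths (ω : ℝ) :
    (adamsMoultonCharCubic ω).toPoly.eval (-7 / 4) =
      ((-539 / 64 : ℝ) : ℂ) + ((13 * ω / 64 : ℝ) : ℂ) * I := by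
  simp only [adamsMoultonCharCubic, Cubic.toPoly, eval_add, eval_mul, eval_C, eval_pow, eval_X]
  push_cast
  ring

lemma exists_adamsMoultonCharCubic_root_one_lt_norm {ω : ℝ} (hω : 3 ≤ ω) :
    ∃ z ∈ (adamsMoultonCharCubic ω).roots, 1 < ‖z‖ := by
  set P := adamsMoultonCharCubic ω
  have ha : P.a ≠ 0 := adamsMoultonCharCubic_a_ne_zero ω
  have ha_eq : P.a = ((1 : ℝ) : ℂ) + ((9 * ω : ℝ) : ℂ) * I := by
    simp only [P, adamsMoultonCharCubic]
    push_cast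
    ring
  have hsmall : ‖P.toPoly.eval (-7 / 4)‖₊ <
      ‖P.toPoly.leadingCoeff‖₊ * (3 / 4) ^ P.toPoly.natDegree := by
    rw [Cubic.leadingCoeff_of_a_ne_zero ha, Cubic.natDegree_of_a_ne_zero ha, ← NNReal.coe_lt_coe]
    push_cast
    rw [adamsMoultonCharCubic_eval_neg_seven_fourths, ← sq_lt_sq₀ (norm_nonneg _) (by positivity),
      mul_pow, Complex.sq_norm, Complex.sq_norm, ha_eq, normSq_add_mul_I, normSq_add_mul_I]
    nlinarith
  obtain ⟨z, hz, hwz⟩ := (IsAlgClosed.splits _).exists_mem_roots_nnnorm_sub_lt hsmall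
  refine ⟨z, hz, ?_⟩
  have hwz' : ‖-7 / 4 - z‖ < 3 / 4 := by exact_mod_cast hwz
  have hw : ‖(-7 / 4 : ℂ)‖ = 7 / 4 := by norm_num
  linarith [norm_sub_norm_le (-7 / 4 : ℂ) z]

/-- The complexified scalar Adams–Moulton 4 recurrence under a constant
`ẑ`-directed magnetic field, `(1 + 9iω) u^{n+3} = (1 - 19iω) u^{n+2} - 5iω u^{n+1} + iω u^n`,
admits (for some `ω > 0`) a solution sequence whose modulus is strictly
increasing; equivalently, the companion matrix has spectral radius `> 1`. -/
theorem adams_moulton_spurious_heating :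
    ∃ ω : ℝ, 0 < ω ∧
      (∃ u : ℕ → ℂ, (∀ n, (1 + 9 * I * ω) * u (n + 3) =
          (1 - 19 * I * ω) * u (n + 2) - 5 * (I * ω) * u (n + 1) + I * ω * u n) ∧
        StrictMono fun n => ‖u n‖) ∧
      ∃ z : ℂ, (1 + 9 * I * ω) * z ^ 3 - (1 - 19 * I * ω) * z ^ 2
          + 5 * (I * ω) * z - I * ω = 0 ∧ 1 < ‖z‖ := by
  obtain ⟨z, hz, hz1⟩ := exists_adamsMoultonCharCubic_root_one_lt_norm le_rfl
  have hroot := (adamsMoultonCharCubic_mem_roots_iff 3 z).1 hz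
  refine ⟨3, by norm_num, ⟨fun n => z ^ n, fun n => ?_, fun m n hmn => ?_⟩, z, hroot, hz1⟩
  · linear_combination z ^ n * hroot
  · simpa only [norm_pow] using pow_lt_pow_right₀ hz1 hmn
end
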